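/- arXiv:1801.05402 — 2 statements merged into one kernel-verified Lean document; each statement's English description precedes it below -/
import Mathlib

section
/- Given optimal shortest-path flows f̂^{rw} routing d_w units from facility r to demand node w (with cost d_w t_{rw}) and an optimal p-median assignment x̂, the aggregated flow f̃_{ij} = Σ_r Σ_w f̂^{rw}_{ij} x̂_{rw} satisfies the flow conservation constraints Af̃ ≤ α I ỹ − d with ỹ_i = x̂_{ii}, and has total cost Σ_{(i,j)} c_{ij} f̃_{ij} = Σ_r Σ_w x̂_{rw} d_w t_{rw}. -/
open Finset

/-- Net outflow (divergence) of an edge flow `f` at node `i`. -/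
noncomputable def netOutflow {V : Type*} [Fintype V] [DecidableEq V]
    (E : Finset (V × V)) (f : V × V → ℝ) (i : V) : ℝ :=
  ((E.filter (fun e => e.1 = i)).sum f) - ((E.filter (fun e => e.2 = i)).sum f)

/-- `g` routes `amt` units from node `r` to node `w` on the edges of `E`. -/
def RoutesFrom {V : Type*} [Fintype V] [DecidableEq V]
    (E : Finset (V × V)) (g : V × V → ℝ) (r w : V) (amt : ℝ) : Prop :=
  (∀ e, 0 ≤ g e) ∧
    ∀ i : V, netOutflow E g i = (if i = r then amt else 0) - (if i = w then amt else 0)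

lemma netOutflow_sum {V : Type*} [Fintype V] [DecidableEq V]
    (E : Finset (V × V)) (fhat : V → V → (V × V) → ℝ) (xhat : V → V → ℝ) (i : V) :
    netOutflow E (fun e => ∑ r, ∑ w, fhat r w e * xhat r w) i
      = ∑ r, ∑ w, xhat r w * netOutflow E (fhat r w) i := by
  unfold netOutflow
  rw [Finset.sum_comm (s := Finset.filter _ E), Finset.sum_comm (s := Finset.filter _ E),
    ← Finset.sum_sub_distrib]
  refine Finset.sum_congr rfl fun r _ => ?_
  rw [Finset.sum_comm (s := Finset.filter (fun e => e.1 = i) E),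
    Finset.sum_comm (s := Finset.filter (fun e => e.2 = i) E), ← Finset.sum_sub_distrib]
  refine Finset.sum_congr rfl fun w _ => ?_
  rw [← Finset.sum_mul, ← Finset.sum_mul]
  ring

/-- Forward direction of Theorem 1: aggregating shortest-path flows `f̂^{rw}`
according to a feasible p-median assignment `x̂` yields a feasible NFF flow with
cost `∑_r ∑_w x̂_{rw} d_w t_{rw}`. -/
theorem pmedian_to_nff_flow (V : Type*) [Fintype V] [DecidableEq V]
    (E : Finset (V × V)) (c : V × V → ℝ) (hc : ∀ e, 0 ≤ c e)
    (d : V → ℝ) (hd : ∀ i, 0 ≤ d i) (α : V → ℝ)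
    (hα : ∀ i : V, (∑ j, d j) ≤ α i) (P : ℕ)
    (t : V → V → ℝ)
    (fhat : V → V → (V × V) → ℝ)
    (hroute : ∀ r w, RoutesFrom E (fhat r w) r w (d w))
    (hcost : ∀ r w, (∑ e ∈ E, c e * fhat r w e) = d w * t r w)
    (xhat : V → V → ℝ)
    (hbin : ∀ i j, xhat i j = 0 ∨ xhat i j = 1)
    (hP : (∑ i, xhat i i) = (P : ℝ))
    (hassign : ∀ w : V, (∑ r, xhat r w) = 1)
    (hopen : ∀ r w, xhat r w ≤ xhat r r) :
    (∀ i : V,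
        netOutflow E (fun e => ∑ r, ∑ w, fhat r w e * xhat r w) i
          ≤ α i * xhat i i - d i) ∧
      (∑ e ∈ E, c e * ∑ r, ∑ w, fhat r w e * xhat r w)
        = ∑ r, ∑ w, xhat r w * (d w * t r w) := by
  have hnn : ∀ r w, 0 ≤ xhat r w := by
    intro r w; rcases hbin r w with h | h <;> simp [h]
  constructor
  · intro i
    rw [netOutflow_sum]
    have hval : ∀ r w, netOutflow E (fhat r w) i
        = (if i = r then d w else 0) - (if i = w then d w else 0) :=
      fun r w => (hroute r w).2 i
    have : (∑ r, ∑ w, xhat r w * netOutflow E (fhat r w) i)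
        = (∑ w, xhat i w * d w) - d i := by
      simp only [hval, mul_sub]
      simp only [Finset.sum_sub_distrib]
      congr 1
      · have h1 : ∀ r, (∑ w, xhat r w * (if i = r then d w else 0))
            = if i = r then (∑ w, xhat r w * d w) else 0 := by
          intro r; split <;> simp
        simp only [h1]
        simp [Finset.sum_ite_eq]
      · have : ∀ r, (∑ w, xhat r w * (if i = w then d w else 0)) = xhat r i * d i := by
          intro r
          simp only [mul_ite, mul_zero]
          simp [Finset.sum_ite_eq, eq_comm]
        simp only [this]
        rw [← Finset.sum_mul, hassign i, one_mul]
    rw [this]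
    have key : (∑ w, xhat i w * d w) ≤ α i * xhat i i := by
      rcases hbin i i with h0 | h1
      · have : ∀ w, xhat i w * d w = 0 := by
          intro w
          have := hopen i w
          rw [h0] at this
          have := le_antisymm this (hnn i w)
          simp [this]
        simp [this, h0]
      · rw [h1, mul_one]
        calc (∑ w, xhat i w * d w) ≤ ∑ w, d w := by
              refine Finset.sum_le_sum fun w _ => ?_
              have h1' : xhat i w ≤ 1 := by rw [← h1]; exact hopen i w
              nlinarith [hd w, hnn i w]
          _ ≤ α i := hα i
    linarith
  · simp only [Finset.mul_sum]
    rw [Finset.sum_comm]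
    refine Finset.sum_congr rfl fun r _ => ?_
    rw [Finset.sum_comm]
    refine Finset.sum_congr rfl fun w _ => ?_
    rw [← hcost r w, Finset.mul_sum]
    exact Finset.sum_congr rfl fun e _ => by ring
end

section
/- The two-stage robust problem min_{y∈Y} max_{k=1,...,N} max_{c∈C} min_{f∈F(y,d^k)} cᵀf, where C = {ĉ + w : w ≥ 0, eᵀw ≤ B} and F(y,d) = {f ≥ 0 : Af ≤ α I y − d}, has the same optimal value as the single-stage problem: minimize t over y ∈ Y, t ∈ ℝ, f^k ∈ ℝ^m, λ^k ∈ ℝ (k = 1,...,N) subject to t ≥ ĉᵀf^k + λ^k B, Af^k ≤ α I y − d^k, 0 ≤ f^k ≤ λ^k e, λ^k ≥ 0 for each k. -/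
/-- The first-stage feasible set `Y = {y ∈ {0,1}^n : eᵀy = P}`. -/
def firstStage (n : ℕ) (P : ℕ) : Set (Fin n → ℝ) :=
  {y | (∀ i, y i = 0 ∨ y i = 1) ∧ (∑ i, y i) = (P : ℝ)}

/-- The second-stage feasible flows `F(y, d) = {f ≥ 0 : Af ≤ αIy − d}`. -/
def flowSet {n m : ℕ} (A : Matrix (Fin n) (Fin m) ℝ) (α : Fin n → ℝ)
    (y : Fin n → ℝ) (d : Fin n → ℝ) : Set (Fin m → ℝ) :=
  {f | (∀ j, 0 ≤ f j) ∧ ∀ i, (∑ j, A i j * f j) ≤ α i * y i - d i}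

/-!
For a fixed first-stage decision and scenario, the inner problem `V = max_w min_{f ∈ F} (ĉ + w)ᵀf`
is a game between a convex set of flows and the budget-constrained delays. Against a fixed flow
`f` the best delay spends the whole budget on an arc of largest flow, so the single-stage cost
`ĉᵀf + λB`, minimised over `λ ≥ max (0, maxⱼ fⱼ)`, is the maximum of finitely many affine
functions of `f`; weak duality follows at once. Conversely, if every flow had single-stage cost
above `V + ε`, separating the cost vectors of the flows (and everything above them) from the
open box below level `V + ε` would yield a probability vector over "no delay / whole budget on
arc `j`", that is, a delay vector within budget whose inner value exceeds `V`. Taking the worst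
scenario and the infimum over `Y` on both sides gives the theorem.
-/

open Finset

theorem Real.sInf_eq_sInf_of_forall_exists_le_add {S T : Set ℝ} (hS : BddBelow S)
    (hT : BddBelow T) (hTS : ∀ t ∈ T, ∃ s ∈ S, s ≤ t)
    (hST : ∀ s ∈ S, ∀ ε > 0, ∃ t ∈ T, t ≤ s + ε) :
    sInf S = sInf T := by
  rcases S.eq_empty_or_nonempty with rfl | ⟨s₀, hs₀⟩
  · have : T = ∅ := Set.eq_empty_of_forall_notMem fun t ht => by simpa using hTS t ht
    rw [this]
  obtain ⟨t₀, ht₀, -⟩ := hST s₀ hs₀ 1 one_pos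
  apply le_antisymm
  · refine le_csInf ⟨t₀, ht₀⟩ fun t ht => ?_
    obtain ⟨s, hs, hst⟩ := hTS t ht
    exact (csInf_le hS hs).trans hst
  · refine le_csInf ⟨s₀, hs₀⟩ fun s hs => le_of_forall_pos_le_add fun ε hε => ?_
    obtain ⟨t, ht, hts⟩ := hST s hs ε hε
    exact (csInf_le hT ht).trans hts

theorem nonneg_of_forall_le_add_mul {r A b : ℝ} (h : ∀ t ≥ 0, r ≤ A + t * b) : 0 ≤ b := by
  by_contra! hb
  have ht : (A - r + 1) / -b * -b = A - r + 1 := div_mul_cancel₀ _ (by linarith)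
  have := h ((A - r + 1) / -b) (div_nonneg (by linarith [h 0 le_rfl]) (by linarith))
  linarith

theorem exists_nonneg_separating_weights {E ι : Type*} [AddCommGroup E] [Module ℝ E]
    [Fintype ι] {F : Set E} {g : ι → E → ℝ} (hg : ∀ v, ConvexOn ℝ F (g v)) {f₀ : E}
    (hf₀ : f₀ ∈ F) {a : ℝ} (h : ∀ f ∈ F, ∃ v, a < g v f) :
    ∃ p : ι → ℝ, 0 ≤ p ∧ ∃ r, (∀ b < a, b * ∑ v, p v < r) ∧
      ∀ f ∈ F, r ≤ ∑ v, g v f * p v := by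
  classical
  obtain ⟨v₀, -⟩ := h f₀ hf₀
  set U : Set (ι → ℝ) := {u | ∃ f ∈ F, ∀ v, g v f ≤ u v}
  set O : Set (ι → ℝ) := Set.univ.pi fun _ => Set.Iio a
  have hO_conv : Convex ℝ O := convex_pi fun _ _ => convex_Iio a
  have hO_open : IsOpen O := isOpen_set_pi Set.finite_univ fun _ _ => isOpen_Iio
  have hU_conv : Convex ℝ U := by
    rintro _ ⟨f₁, hf₁, hu₁⟩ _ ⟨f₂, hf₂, hu₂⟩ s t hs ht hst
    refine ⟨s • f₁ + t • f₂, (hg v₀).1 hf₁ hf₂ hs ht hst, fun v => ?_⟩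
    calc g v (s • f₁ + t • f₂) ≤ s * g v f₁ + t * g v f₂ := (hg v).2 hf₁ hf₂ hs ht hst
      _ ≤ s * _ + t * _ := by gcongr <;> apply_assumption
  have hdisj : Disjoint O U := by
    refine Set.disjoint_left.2 fun u hu ⟨f, hf, hfu⟩ => ?_
    obtain ⟨v, hv⟩ := h f hf
    exact (hv.trans_le (hfu v)).not_gt (hu v (Set.mem_univ v))
  obtain ⟨q, r, hqO, hqU⟩ := geometric_hahn_banach_open hO_conv hO_open hU_conv hdisj
  set e : ι → ι → ℝ := fun v j => if v = j then 1 else 0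
  have hq : ∀ u, q u = ∑ v, u v * q (e v) := fun u => q.toLinearMap.pi_apply_eq_sum_univ u
  have hgU : ∀ f ∈ F, (fun v => g v f) ∈ U := fun f hf => ⟨f, hf, fun _ => le_rfl⟩
  -- `U` is closed upwards, so `q` is nonnegative on the basis vectors
  have hq_nonneg : ∀ v, 0 ≤ q (e v) := fun v =>
    nonneg_of_forall_le_add_mul (r := r) (A := q fun v => g v f₀) fun t ht => by
      have hmem : (fun v => g v f₀) + t • e v ∈ U := by
        refine ⟨f₀, hf₀, fun w => le_add_of_nonneg_right (mul_nonneg ht ?_)⟩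
        simp only [e]
        split_ifs <;> norm_num
      simpa only [map_add, map_smul, smul_eq_mul] using hqU _ hmem
  refine ⟨fun v => q (e v), hq_nonneg, r, fun b hb => ?_,
    fun f hf => (hqU _ (hgU f hf)).trans_eq (hq _)⟩
  have := hqO (fun _ => b) fun _ _ => hb
  rwa [hq, ← mul_sum] at this

theorem exists_stdSimplex_le_sum_mul_of_forall_exists_lt {E ι : Type*} [AddCommGroup E]
    [Module ℝ E] [Fintype ι] {F : Set E} {g : ι → E → ℝ} (hg : ∀ v, ConvexOn ℝ F (g v))
    (hF : F.Nonempty) {a : ℝ} (h : ∀ f ∈ F, ∃ v, a < g v f) :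
    ∃ p ∈ stdSimplex ℝ ι, ∀ f ∈ F, a ≤ ∑ v, p v * g v f := by
  obtain ⟨f₀, hf₀⟩ := hF
  obtain ⟨p, hp, r, hpO, hpU⟩ := exists_nonneg_separating_weights hg hf₀ h
  set s := ∑ v, p v
  have hs : 0 < s := by
    by_contra! hs
    replace hs : s = 0 := hs.antisymm (sum_nonneg fun v _ => hp v)
    have hp0 : ∀ v, p v = 0 := fun v =>
      (sum_eq_zero_iff_of_nonneg fun v _ => hp v).1 hs v (mem_univ v)
    have h1 := hpO (a - 1) (by linarith)
    have h2 := hpU f₀ hf₀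
    simp only [hs, hp0, mul_zero, sum_const_zero] at h1 h2
    linarith
  refine ⟨fun v => p v / s, ⟨fun v => div_nonneg (hp v) hs.le, ?_⟩, fun f hf => ?_⟩
  · rw [← sum_div, div_self hs.ne']
  · calc a ≤ r / s := le_of_forall_lt fun b hb => (lt_div_iff₀ hs).2 (hpO b hb)
      _ ≤ (∑ v, g v f * p v) / s := by gcongr; exact hpU f hf
      _ = ∑ v, p v / s * g v f := by rw [sum_div]; congr! 1 with v; ring

section RobustValue

variable {ι : Type*} [Fintype ι] {c : ι → ℝ} {B : ℝ} {F : Set (ι → ℝ)}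

noncomputable def robustValue (c : ι → ℝ) (B : ℝ) (F : Set (ι → ℝ)) : ℝ :=
  sSup {u : ℝ | ∃ w : ι → ℝ, (∀ j, 0 ≤ w j) ∧ (∑ j, w j) ≤ B ∧
    u = sInf {z : ℝ | ∃ f ∈ F, z = ∑ j, (c j + w j) * f j}}

theorem sInf_cost_le (hc : 0 ≤ c) (hF : ∀ f ∈ F, 0 ≤ f) {w : ι → ℝ} (hw : ∀ j, 0 ≤ w j)
    (hwB : ∑ j, w j ≤ B) {f : ι → ℝ} (hf : f ∈ F) {lam : ℝ} (hlam : 0 ≤ lam)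
    (hfl : ∀ j, f j ≤ lam) :
    sInf {z : ℝ | ∃ f ∈ F, z = ∑ j, (c j + w j) * f j} ≤ ∑ j, c j * f j + lam * B := by
  have hbdd : BddBelow {z : ℝ | ∃ f ∈ F, z = ∑ j, (c j + w j) * f j} := ⟨0, by
    rintro _ ⟨f, hf, rfl⟩
    exact sum_nonneg fun j _ => mul_nonneg (add_nonneg (hc j) (hw j)) (hF f hf j)⟩
  calc sInf _ ≤ ∑ j, (c j + w j) * f j := csInf_le hbdd ⟨f, hf, rfl⟩
    _ = ∑ j, c j * f j + ∑ j, w j * f j := by simp only [add_mul, sum_add_distrib]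
    _ ≤ ∑ j, c j * f j + ∑ j, w j * lam := by gcongr with j; exacts [hw j, hfl j]
    _ = ∑ j, c j * f j + (∑ j, w j) * lam := by rw [sum_mul]
    _ ≤ ∑ j, c j * f j + lam * B := by rw [mul_comm lam]; gcongr

theorem robustValue_le (hc : 0 ≤ c) (hB : 0 ≤ B) (hF : ∀ f ∈ F, 0 ≤ f) {f : ι → ℝ}
    (hf : f ∈ F) {lam : ℝ} (hlam : 0 ≤ lam) (hfl : ∀ j, f j ≤ lam) :
    robustValue c B F ≤ ∑ j, c j * f j + lam * B :=
  csSup_le ⟨_, 0, fun _ => le_rfl, by simpa using hB, rfl⟩ fun _ ⟨_, hw, hwB, hu⟩ =>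
    hu ▸ sInf_cost_le hc hF hw hwB hf hlam hfl

theorem robustValue_nonneg (hc : 0 ≤ c) (hF : ∀ f ∈ F, 0 ≤ f) : 0 ≤ robustValue c B F :=
  Real.sSup_nonneg fun _ ⟨_, hw, _, hu⟩ => hu ▸ Real.sInf_nonneg fun _ ⟨f, hf, hz⟩ =>
    hz ▸ sum_nonneg fun j _ => mul_nonneg (add_nonneg (hc j) (hw j)) (hF f hf j)

/-- The cost of `f` when the whole delay budget goes to arc `j` (`v = some j`) or nowhere
(`v = none`); these are the extreme points of the delay set. -/
def budgetCost (c : ι → ℝ) (B : ℝ) (v : Option ι) (f : ι → ℝ) : ℝ :=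
  ∑ j, c j * f j + B * v.elim 0 f

theorem convexOn_budgetCost (hFc : Convex ℝ F) (v : Option ι) :
    ConvexOn ℝ F (budgetCost c B v) := by
  refine ⟨hFc, fun f₁ _ f₂ _ s t _ _ _ => le_of_eq ?_⟩
  cases v <;> simp only [budgetCost, Option.elim_none, Option.elim_some, Pi.add_apply,
    Pi.smul_apply, smul_eq_mul, mul_add, sum_add_distrib, mul_left_comm (c _), ← mul_sum] <;> ring

theorem exists_bound_cost_eq_budgetCost (c : ι → ℝ) (B : ℝ) (f : ι → ℝ) :
    ∃ v lam, 0 ≤ lam ∧ (∀ j, f j ≤ lam) ∧ ∑ j, c j * f j + lam * B = budgetCost c B v f := by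
  obtain ⟨v, -, hv⟩ := exists_max_image univ (fun v : Option ι => v.elim 0 f) univ_nonempty
  exact ⟨v, _, hv none (mem_univ _), fun j => hv (some j) (mem_univ _), by
    rw [budgetCost, mul_comm]⟩

theorem sum_mul_budgetCost {p : Option ι → ℝ} (hp : ∑ v, p v = 1) (f : ι → ℝ) :
    ∑ v, p v * budgetCost c B v f = ∑ j, (c j + B * p (some j)) * f j := by
  rw [Fintype.sum_option] at hp ⊢
  simp only [budgetCost, Option.elim, mul_add, add_mul, sum_add_distrib, ← sum_mul, mul_zero,
    add_zero, mul_left_comm (p (some _)), mul_assoc]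
  rw [← add_assoc, ← add_mul, hp, one_mul]

theorem exists_cost_le_robustValue_add (hc : 0 ≤ c) (hB : 0 ≤ B) (hF : ∀ f ∈ F, 0 ≤ f)
    (hFc : Convex ℝ F) (hFne : F.Nonempty) {ε : ℝ} (hε : 0 < ε) :
    ∃ f ∈ F, ∃ lam, 0 ≤ lam ∧ (∀ j, f j ≤ lam) ∧
      ∑ j, c j * f j + lam * B ≤ robustValue c B F + ε := by
  set V := robustValue c B F
  by_contra! hcon
  have hgap : ∀ f ∈ F, ∃ v, V + ε < budgetCost c B v f := fun f hf => by
    obtain ⟨v, lam, hlam, hfl, hcost⟩ := exists_bound_cost_eq_budgetCost c B f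
    exact ⟨v, hcost ▸ hcon f hf lam hlam hfl⟩
  -- the adversary's mixed strategy `p` is a delay vector `w` within budget
  obtain ⟨p, ⟨hp, hp1⟩, hpF⟩ :=
    exists_stdSimplex_le_sum_mul_of_forall_exists_lt (convexOn_budgetCost hFc) hFne hgap
  set w : ι → ℝ := fun j => B * p (some j)
  have hw : ∀ j, 0 ≤ w j := fun j => mul_nonneg hB (hp _)
  have hwB : ∑ j, w j ≤ B := by
    have hsome : ∑ j, p (some j) ≤ 1 := by
      rw [Fintype.sum_option] at hp1
      linarith [hp none]
    calc ∑ j, w j = B * ∑ j, p (some j) := (mul_sum ..).symm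
      _ ≤ B * 1 := by gcongr
      _ = B := mul_one B
  have hV_le : V + ε ≤ sInf {z : ℝ | ∃ f ∈ F, z = ∑ j, (c j + w j) * f j} :=
    le_csInf ⟨_, hFne.some, hFne.some_mem, rfl⟩ fun _ ⟨f, hf, hz⟩ =>
      hz ▸ sum_mul_budgetCost hp1 f ▸ hpF f hf
  have hle_V : sInf {z : ℝ | ∃ f ∈ F, z = ∑ j, (c j + w j) * f j} ≤ V := by
    obtain ⟨f₀, hf₀⟩ := hFne
    obtain ⟨-, lam, hlam, hfl, -⟩ := exists_bound_cost_eq_budgetCost c B f₀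
    refine le_csSup ⟨∑ j, c j * f₀ j + lam * B, ?_⟩ ⟨w, hw, hwB, rfl⟩
    rintro _ ⟨w', hw', hwB', rfl⟩
    exact sInf_cost_le hc hF hw' hwB' hf₀ hlam hfl
  linarith

end RobustValue

theorem convex_flowSet {n m : ℕ} (A : Matrix (Fin n) (Fin m) ℝ) (α y d : Fin n → ℝ) :
    Convex ℝ (flowSet A α y d) := by
  have : flowSet A α y d = {f | 0 ≤ f} ∩ ⋂ i, {f | A.mulVec f i ≤ α i * y i - d i} := by
    ext f; simp [flowSet, Matrix.mulVec, dotProduct, Pi.le_def]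
  rw [this]
  exact (convex_Ici 0).inter (convex_iInter fun i =>
    convex_halfSpace_le ((LinearMap.proj i).comp (Matrix.mulVecLin A)).isLinear _)

theorem two_stage_robust_reformulation_general (n m N P : ℕ) (hN : 0 < N)
    (A : Matrix (Fin n) (Fin m) ℝ) (chat : Fin m → ℝ) (hchat : ∀ j, 0 ≤ chat j)
    (B : ℝ) (hB : 0 ≤ B) (α : Fin n → ℝ) (d : Fin N → Fin n → ℝ)
    (hfeas : ∀ y ∈ firstStage n P, ∀ k, (flowSet A α y (d k)).Nonempty) :
    sInf {v : ℝ | ∃ y ∈ firstStage n P, v =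
        ⨆ k : Fin N, sSup {u : ℝ | ∃ w : Fin m → ℝ, (∀ j, 0 ≤ w j) ∧
          (∑ j, w j) ≤ B ∧
          u = sInf {z : ℝ | ∃ f ∈ flowSet A α y (d k),
            z = ∑ j, (chat j + w j) * f j}}}
      = sInf {t : ℝ | ∃ y ∈ firstStage n P,
          ∃ (f : Fin N → Fin m → ℝ) (lam : Fin N → ℝ),
          ∀ k, (∀ j, 0 ≤ f k j ∧ f k j ≤ lam k) ∧ 0 ≤ lam k ∧
            (∀ i, (∑ j, A i j * f k j) ≤ α i * y i - d k i) ∧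
            (∑ j, chat j * f k j) + lam k * B ≤ t} := by
  have : Nonempty (Fin N) := Fin.pos_iff_nonempty.mp hN
  have hflow_nonneg : ∀ y k, ∀ f ∈ flowSet A α y (d k), 0 ≤ f := fun _ _ _ hf => hf.1
  change sInf {v | ∃ y ∈ firstStage n P,
    v = ⨆ k, robustValue chat B (flowSet A α y (d k))} = _
  refine Real.sInf_eq_sInf_of_forall_exists_le_add ⟨0, ?_⟩ ⟨0, ?_⟩ ?_ ?_
  · rintro _ ⟨y, -, rfl⟩
    exact Real.iSup_nonneg fun k => robustValue_nonneg hchat (hflow_nonneg y k)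
  · rintro t ⟨y, -, f, lam, hk⟩
    obtain ⟨hfl, hlam, -, hcost⟩ := hk ⟨0, hN⟩
    exact (add_nonneg (sum_nonneg fun j _ => mul_nonneg (hchat j) (hfl j).1)
      (mul_nonneg hlam hB)).trans hcost
  · rintro t ⟨y, hy, f, lam, hk⟩
    refine ⟨_, ⟨y, hy, rfl⟩, ciSup_le fun k => ?_⟩
    obtain ⟨hfl, hlam, hflow, hcost⟩ := hk k
    exact (robustValue_le hchat hB (hflow_nonneg y k) ⟨fun j => (hfl j).1, hflow⟩ hlam
      fun j => (hfl j).2).trans hcost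
  · rintro _ ⟨y, hy, rfl⟩ ε hε
    choose f hf lam hlam hfl hcost using fun k => exists_cost_le_robustValue_add hchat hB
      (hflow_nonneg y k) (convex_flowSet A α y (d k)) (hfeas y hy k) hε
    refine ⟨_, ⟨y, hy, f, lam, fun k => ⟨fun j => ⟨(hf k).1 j, hfl k j⟩, hlam k, (hf k).2,
      (hcost k).trans ?_⟩⟩, le_rfl⟩
    exact add_le_add_left (le_ciSup (f := fun k => robustValue chat B (flowSet A α y (d k)))
      (Finite.bddAbove_range _) k) ε

/-- Theorem 2: the two-stage robust problem equals the single-stage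
mixed-integer linear reformulation. -/
theorem two_stage_robust_reformulation (n m N P : ℕ) (hN : 0 < N)
    (A : Matrix (Fin n) (Fin m) ℝ) (chat : Fin m → ℝ) (hchat : ∀ j, 0 ≤ chat j)
    (B : ℝ) (hB : 0 ≤ B) (α : Fin n → ℝ) (d : Fin N → Fin n → ℝ)
    (hα : ∀ k i, (∑ i', d k i') ≤ α i)
    (hfeas : ∀ y ∈ firstStage n P, ∀ k, (flowSet A α y (d k)).Nonempty) :
    sInf {v : ℝ | ∃ y ∈ firstStage n P, v =
        ⨆ k : Fin N, sSup {u : ℝ | ∃ w : Fin m → ℝ, (∀ j, 0 ≤ w j) ∧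
          (∑ j, w j) ≤ B ∧
          u = sInf {z : ℝ | ∃ f ∈ flowSet A α y (d k),
            z = ∑ j, (chat j + w j) * f j}}}
      = sInf {t : ℝ | ∃ y ∈ firstStage n P,
          ∃ (f : Fin N → Fin m → ℝ) (lam : Fin N → ℝ),
          ∀ k, (∀ j, 0 ≤ f k j ∧ f k j ≤ lam k) ∧ 0 ≤ lam k ∧
            (∀ i, (∑ j, A i j * f k j) ≤ α i * y i - d k i) ∧
            (∑ j, chat j * f k j) + lam k * B ≤ t} :=
  two_stage_robust_reformulation_general n m N P hN A chat hchat B hB α d hfeas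
end
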